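/- arXiv:2206.03640 — 2 statements merged into one kernel-verified Lean document; each statement's English description precedes it below -/
import Mathlib

section
/- Let B, k, y, e ∈ ℝ with k ≤ 0, and let x : ℝ → ℝ be differentiable at t with x'(t) = B·y + k·x(t) + k·e. Then the upper right Dini derivative of s ↦ |x(s)| at t satisfies limsup_{h→0⁺} (|x(t+h)| − |x(t)|)/h ≤ |B|·|y| + k·|x(t)| + |k|·|e|. -/
/-- The upper right Dini derivative of `w` at `t`:
`D⁺w(t) = limsup_{h→0⁺} (w(t+h) − w(t))/h`, valued in `EReal`. -/
noncomputable def upperDini (w : ℝ → ℝ) (t : ℝ) : EReal :=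
  Filter.limsup (fun h : ℝ => (((w (t + h) - w t) / h : ℝ) : EReal))
    (nhdsWithin 0 (Set.Ioi 0))

/-!
Write `x'(t) = a + k x(t)`. For small `h > 0` the factor `1 + h k` is positive, so
`‖x(t) + h x'(t)‖ = ‖(1 + h k) x(t) + h a‖ ≤ (1 + h k) ‖x(t)‖ + h ‖a‖`, and the difference
quotient of `‖x‖` is at most `k ‖x(t)‖ + ‖a‖` plus `‖x(t+h) − x(t) − h x'(t)‖ / h`, which tends
to `0`. For the scalar system `a = B y + k e`, and `|B y + k e| ≤ |B| |y| + |k| |e|`.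
-/

open Filter Topology

theorem upperDini_le_of_eventually_le_of_tendsto {w g : ℝ → ℝ} {t L : ℝ}
    (hle : ∀ᶠ h in 𝓝[>] 0, (w (t + h) - w t) / h ≤ g h) (hg : Tendsto g (𝓝[>] 0) (𝓝 L)) :
    upperDini w t ≤ L := by
  have hlim : limsup (fun h => (g h : EReal)) (𝓝[>] 0) = L :=
    (EReal.tendsto_coe.mpr hg).limsup_eq
  rw [upperDini, ← hlim]
  exact limsup_le_limsup (hle.mono fun h hh => EReal.coe_le_coe_iff.mpr hh)

section NormedSpace

variable {E : Type*} [NormedAddCommGroup E] [NormedSpace ℝ E]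

theorem HasDerivAt.tendsto_norm_remainder_div {x : ℝ → E} {d : E} {t : ℝ}
    (hx : HasDerivAt x d t) :
    Tendsto (fun h => ‖x (t + h) - x t - h • d‖ / h) (𝓝[>] 0) (𝓝 0) :=
  (hasDerivAt_iff_isLittleO_nhds_zero.mp hx).norm_left.tendsto_div_nhds_zero.mono_left
    nhdsWithin_le_nhds

theorem norm_add_smul_add_smul_le (v a : E) {h k : ℝ} (hh : 0 ≤ h) (hhk : 0 ≤ 1 + h * k) :
    ‖v + h • (a + k • v)‖ ≤ (1 + h * k) * ‖v‖ + h * ‖a‖ := by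
  have hsplit : v + h • (a + k • v) = (1 + h * k) • v + h • a := by
    rw [smul_add, smul_smul, add_smul, one_smul]; abel
  calc ‖v + h • (a + k • v)‖ ≤ ‖(1 + h * k) • v‖ + ‖h • a‖ := hsplit ▸ norm_add_le _ _
    _ = (1 + h * k) * ‖v‖ + h * ‖a‖ := by
      rw [norm_smul, norm_smul, Real.norm_of_nonneg hhk, Real.norm_of_nonneg hh]

theorem upperDini_norm_le_of_hasDerivAt {x : ℝ → E} {a : E} {k t : ℝ}
    (hx : HasDerivAt x (a + k • x t) t) :
    upperDini (fun s => ‖x s‖) t ≤ ((k * ‖x t‖ + ‖a‖ : ℝ) : EReal) := by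
  set d := a + k • x t
  have hpos : ∀ᶠ h in 𝓝[>] (0 : ℝ), 0 < 1 + h * k := by
    have h1 : Tendsto (fun h : ℝ => 1 + h * k) (𝓝 0) (𝓝 1) :=
      Continuous.tendsto' (by fun_prop) 0 1 (by simp)
    exact nhdsWithin_le_nhds (h1.eventually (eventually_gt_nhds one_pos))
  refine upperDini_le_of_eventually_le_of_tendsto (g := fun h =>
    k * ‖x t‖ + ‖a‖ + ‖x (t + h) - x t - h • d‖ / h) ?_ ?_
  · filter_upwards [self_mem_nhdsWithin, hpos] with h (hh : 0 < h) hhk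
    have hnorm : ‖x (t + h)‖ ≤ (1 + h * k) * ‖x t‖ + h * ‖a‖ + ‖x (t + h) - x t - h • d‖ :=
      calc ‖x (t + h)‖ ≤ ‖x t + h • d‖ + ‖x (t + h) - x t - h • d‖ := by
            simpa using norm_add_le (x t + h • d) (x (t + h) - x t - h • d)
        _ ≤ _ := by gcongr; exact norm_add_smul_add_smul_le _ _ hh.le hhk.le
    rw [div_le_iff₀ hh, add_mul, div_mul_cancel₀ _ hh.ne']
    linarith
  · simpa using hx.tendsto_norm_remainder_div.const_add (k * ‖x t‖ + ‖a‖)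

end NormedSpace

theorem stmt_14_general (B k y e t : ℝ) (x : ℝ → ℝ)
    (hx : HasDerivAt x (B * y + k * x t + k * e) t) :
    upperDini (fun s => |x s|) t ≤ ((|B| * |y| + k * |x t| + |k| * |e| : ℝ) : EReal) := by
  have hx' : HasDerivAt x ((B * y + k * e) + k • x t) t := by
    rw [smul_eq_mul]; convert hx using 1; ring
  have hforcing : |B * y + k * e| ≤ |B| * |y| + |k| * |e| := by
    simpa only [abs_mul] using abs_add_le (B * y) (k * e)
  have hnorm := upperDini_norm_le_of_hasDerivAt hx'
  simp only [Real.norm_eq_abs] at hnorm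
  exact hnorm.trans (EReal.coe_le_coe_iff.mpr (by linarith))

theorem stmt_14 (B k y e t : ℝ) (hk : k ≤ 0) (x : ℝ → ℝ)
    (hx : HasDerivAt x (B * y + k * x t + k * e) t) :
    upperDini (fun s => |x s|) t ≤ ((|B| * |y| + k * |x t| + |k| * |e| : ℝ) : EReal) :=
  stmt_14_general B k y e t x hx
end

section
/- Let r > 0, B ∈ ℝ, k < 0, p > 0, let q1 = p·|B| and let q2 satisfy q1 < q2 and k + q2/p < 0. Let ε : ℝ → ℝ, and let x : ℝ → ℝ be continuous and differentiable at every t with x'(t) = B·x(t−r) + k·x(t) + k·ε(t). Define v(t) = p·|x(t)| + ∫_{t−r}^{t} |x(s)| · ( ((t−s)/r)·q1 + ((s−t+r)/r)·q2 ) ds. Then for every t the upper right Dini derivative satisfies D⁺v(t) ≤ −μ·v(t) + p·|k|·|ε(t)|, where μ = min{ −(k + q2/p), (q2−q1)/(r·q2) } > 0. -/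
open Filter Set Topology

theorem upperDini_eq_of_hasDerivWithinAt {w : ℝ → ℝ} {d t : ℝ}
    (hw : HasDerivWithinAt w d (Ioi t) t) : upperDini w t = d := by
  have hshift : Tendsto (t + ·) (𝓝[>] 0) (𝓝[>] t) := by
    refine tendsto_nhdsWithin_of_tendsto_nhds_of_eventually_within _ ?_ ?_
    · exact ((continuous_const_add t).tendsto' 0 t (add_zero t)).mono_left nhdsWithin_le_nhds
    · filter_upwards [self_mem_nhdsWithin] with h (hh : 0 < h)
      exact lt_add_of_pos_right t hh
  have hslope := ((hasDerivWithinAt_iff_tendsto_slope' self_notMem_Ioi).1 hw).comp hshift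
  refine ((continuous_coe_real_ereal.tendsto d).comp (hslope.congr fun h => ?_)).limsup_eq
  simp [slope_def_field, div_eq_inv_mul]

theorem HasDerivAt.hasDerivWithinAt_abs_Ioi_of_eq_zero {f : ℝ → ℝ} {f' t : ℝ}
    (hf : HasDerivAt f f' t) (h0 : f t = 0) :
    HasDerivWithinAt (fun s => |f s|) |f'| (Ioi t) t := by
  rw [hasDerivWithinAt_iff_tendsto_slope' self_notMem_Ioi]
  refine (hf.tendsto_slope.mono_left (nhdsGT_le_nhdsNE t)).abs.congr' ?_
  filter_upwards [self_mem_nhdsWithin] with s (hs : t < s)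
  simp [slope_def_field, h0, abs_div, abs_of_pos (sub_pos.2 hs)]

/-- The free constant `c` lets the bound keep a damping term `c |f t|` with `c < 0`. -/
theorem HasDerivAt.exists_hasDerivWithinAt_abs_Ioi_le {f : ℝ → ℝ} {f' t : ℝ}
    (hf : HasDerivAt f f' t) (c : ℝ) :
    ∃ d, HasDerivWithinAt (fun s => |f s|) d (Ioi t) t ∧ d ≤ |f' - c * f t| + c * |f t| := by
  rcases lt_trichotomy (f t) 0 with hneg | hzero | hpos
  · refine ⟨-1 * f', ((hasDerivAt_abs_neg hneg).comp t hf).hasDerivWithinAt, ?_⟩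
    rw [abs_of_neg hneg]
    linarith [neg_abs_le (f' - c * f t)]
  · exact ⟨|f'|, hf.hasDerivWithinAt_abs_Ioi_of_eq_zero hzero, by simp [hzero]⟩
  · refine ⟨1 * f', ((hasDerivAt_abs_pos hpos).comp t hf).hasDerivWithinAt, ?_⟩
    rw [abs_of_pos hpos]
    linarith [le_abs_self (f' - c * f t)]

theorem hasDerivAt_integral_window {g : ℝ → ℝ} (hg : Continuous g) (r u : ℝ) :
    HasDerivAt (fun u => ∫ s in (u - r)..u, g s) (g u - g (u - r)) u := by
  have hF (a : ℝ) : HasDerivAt (fun u => ∫ s in (0 : ℝ)..u, g s) (g a) a :=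
    (hg.integral_hasStrictDerivAt 0 a).hasDerivAt
  refine ((hF u).sub ((hF (u - r)).comp_sub_const u r)).congr_of_eventuallyEq
    (Eventually.of_forall fun v => ?_)
  exact (intervalIntegral.integral_interval_sub_left (hg.intervalIntegrable _ _)
    (hg.intervalIntegrable _ _)).symm

/-- The functional part `V₂` of the Lyapunov–Krasovskii function: the weight of `g s` runs
linearly from `a` at `s = u - r` to `b` at `s = u`. -/
noncomputable def weightedWindowIntegral (g : ℝ → ℝ) (r a b u : ℝ) : ℝ :=
  ∫ s in (u - r)..u, g s * ((u - s) / r * a + (s - u + r) / r * b)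

section
variable {g : ℝ → ℝ} {r a b : ℝ}

theorem weightedWindowIntegral_eq_moments (hg : Continuous g) (hr : r ≠ 0) (u : ℝ) :
    weightedWindowIntegral g r a b u = b * (∫ s in (u - r)..u, g s) +
      (a - b) / r * (u * (∫ s in (u - r)..u, g s) - ∫ s in (u - r)..u, s * g s) := by
  have hg' : Continuous fun s => s * g s := continuous_id.mul hg
  have hweight (s : ℝ) : g s * ((u - s) / r * a + (s - u + r) / r * b) =
      b * g s + (a - b) / r * (u * g s - s * g s) := by
    field_simp
    ring
  simp only [weightedWindowIntegral, hweight]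
  rw [intervalIntegral.integral_add ((hg.intervalIntegrable _ _).const_mul b)
      ((((hg.intervalIntegrable _ _).const_mul u).sub (hg'.intervalIntegrable _ _)).const_mul _),
    intervalIntegral.integral_const_mul, intervalIntegral.integral_const_mul,
    intervalIntegral.integral_sub ((hg.intervalIntegrable _ _).const_mul u)
      (hg'.intervalIntegrable _ _), intervalIntegral.integral_const_mul]

theorem hasDerivAt_weightedWindowIntegral (hg : Continuous g) (hr : r ≠ 0) (u : ℝ) :
    HasDerivAt (weightedWindowIntegral g r a b)
      (b * g u - a * g (u - r) - (b - a) / r * ∫ s in (u - r)..u, g s) u := by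
  have hI := hasDerivAt_integral_window hg r u
  have hJ := hasDerivAt_integral_window (g := fun s => s * g s) (continuous_id.mul hg) r u
  rw [funext (weightedWindowIntegral_eq_moments (a := a) (b := b) hg hr)]
  refine ((hI.const_mul b).add ((((hasDerivAt_id' u).mul hI).sub hJ).const_mul
    ((a - b) / r))).congr_deriv ?_
  field_simp
  ring

theorem weightedWindowIntegral_le (hg : Continuous g) (hg0 : ∀ s, 0 ≤ g s) (hr : 0 < r)
    (hab : a ≤ b) (u : ℝ) :
    weightedWindowIntegral g r a b u ≤ b * ∫ s in (u - r)..u, g s := by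
  rw [← intervalIntegral.integral_const_mul]
  refine intervalIntegral.integral_mono_on (by linarith)
    ((hg.mul (by fun_prop)).intervalIntegrable _ _) ((hg.const_mul b).intervalIntegrable _ _)
    fun s ⟨hs₁, hs₂⟩ => ?_
  have hweight : (u - s) / r * a + (s - u + r) / r * b ≤ b := by
    have : (u - s) / r * a ≤ (u - s) / r * b :=
      mul_le_mul_of_nonneg_left hab (div_nonneg (by linarith) hr.le)
    have : (u - s) / r * b + (s - u + r) / r * b = b := by field_simp; ring
    linarith
  nlinarith [hg0 s]

theorem mul_weightedWindowIntegral_le (hg : Continuous g) (hg0 : ∀ s, 0 ≤ g s) (hr : 0 < r)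
    (hab : a ≤ b) (hb : 0 < b) {μ : ℝ} (hμ0 : 0 ≤ μ) (hμ : μ ≤ (b - a) / (r * b)) (u : ℝ) :
    μ * weightedWindowIntegral g r a b u ≤ (b - a) / r * ∫ s in (u - r)..u, g s := by
  have hI : 0 ≤ ∫ s in (u - r)..u, g s :=
    intervalIntegral.integral_nonneg (by linarith) fun s _ => hg0 s
  calc _ ≤ (b - a) / (r * b) * (b * ∫ s in (u - r)..u, g s) :=
        (mul_le_mul_of_nonneg_left (weightedWindowIntegral_le hg hg0 hr hab u) hμ0).trans
          (mul_le_mul_of_nonneg_right hμ (mul_nonneg hb.le hI))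
    _ = (b - a) / r * ∫ s in (u - r)..u, g s := by field_simp

end

theorem stmt_15_general (r B k p q1 q2 : ℝ) (hr : 0 < r) (hp : 0 < p)
    (hq1 : q1 = p * |B|) (hq12 : q1 < q2) (hstab : k + q2 / p < 0)
    (ε : ℝ → ℝ) (x : ℝ → ℝ) (hx_cont : Continuous x)
    (hx_deriv : ∀ t, HasDerivAt x (B * x (t - r) + k * x t + k * ε t) t)
    (v : ℝ → ℝ)
    (hv : ∀ t, v t = p * |x t| +
      ∫ s in (t - r)..t, |x s| * (((t - s) / r) * q1 + ((s - t + r) / r) * q2)) :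
    0 < min (-(k + q2 / p)) ((q2 - q1) / (r * q2)) ∧
    ∀ t, upperDini v t ≤
      ((-(min (-(k + q2 / p)) ((q2 - q1) / (r * q2))) * v t + p * |k| * |ε t| : ℝ) : EReal) := by
  have hq2 : 0 < q2 := (hq1 ▸ mul_nonneg hp.le (abs_nonneg B)).trans_lt hq12
  set μ := min (-(k + q2 / p)) ((q2 - q1) / (r * q2))
  have hμ : 0 < μ := lt_min (by linarith) (div_pos (by linarith) (mul_pos hr hq2))
  refine ⟨hμ, fun t => ?_⟩
  obtain ⟨d, hd, hd_le⟩ := (hx_deriv t).exists_hasDerivWithinAt_abs_Ioi_le k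
  set I := ∫ s in (t - r)..t, |x s|
  have hvd : HasDerivWithinAt v (p * d + (q2 * |x t| - q1 * |x (t - r)| - (q2 - q1) / r * I))
      (Ioi t) t := by
    rw [show v = _ from funext hv]
    exact (hd.const_mul p).add
      (hasDerivAt_weightedWindowIntegral hx_cont.abs hr.ne' t).hasDerivWithinAt
  have hvt : v t = p * |x t| + weightedWindowIntegral (fun s => |x s|) r q1 q2 t := hv t
  rw [upperDini_eq_of_hasDerivWithinAt hvd, EReal.coe_le_coe_iff, hvt]
  have hdelay : |B * x (t - r) + k * x t + k * ε t - k * x t| ≤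
      |B| * |x (t - r)| + |k| * |ε t| := by
    simpa only [add_sub_right_comm _ (k * ε t), add_sub_cancel_right, abs_mul]
      using abs_add_le (B * x (t - r)) (k * ε t)
  -- `q1 = p |B|` is exactly what makes the delayed term here cancel the one from `V₂`.
  have hpd : p * d ≤ q1 * |x (t - r)| + p * |k| * |ε t| + p * k * |x t| :=
    calc p * d ≤ p * (|B| * |x (t - r)| + |k| * |ε t| + k * |x t|) :=
          mul_le_mul_of_nonneg_left (by linarith) hp.le
      _ = _ := by rw [hq1]; ring
  have hμp : μ * p ≤ -(p * k + q2) := by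
    have := mul_le_mul_of_nonneg_right (min_le_left _ _ : μ ≤ _) hp.le
    rwa [neg_mul, add_mul, div_mul_cancel₀ _ hp.ne', mul_comm k] at this
  have hμV := mul_weightedWindowIntegral_le hx_cont.abs (fun s => abs_nonneg (x s)) hr hq12.le
    hq2 hμ.le (min_le_right _ _) t
  linarith [mul_le_mul_of_nonneg_right hμp (abs_nonneg (x t))]

theorem stmt_15 (r B k p q1 q2 : ℝ) (hr : 0 < r) (hk : k < 0) (hp : 0 < p)
    (hq1 : q1 = p * |B|) (hq12 : q1 < q2) (hstab : k + q2 / p < 0)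
    (ε : ℝ → ℝ) (x : ℝ → ℝ) (hx_cont : Continuous x)
    (hx_deriv : ∀ t, HasDerivAt x (B * x (t - r) + k * x t + k * ε t) t)
    (v : ℝ → ℝ)
    (hv : ∀ t, v t = p * |x t| +
      ∫ s in (t - r)..t, |x s| * (((t - s) / r) * q1 + ((s - t + r) / r) * q2)) :
    0 < min (-(k + q2 / p)) ((q2 - q1) / (r * q2)) ∧
    ∀ t, upperDini v t ≤
      ((-(min (-(k + q2 / p)) ((q2 - q1) / (r * q2))) * v t + p * |k| * |ε t| : ℝ) : EReal) :=
  stmt_15_general r B k p q1 q2 hr hp hq1 hq12 hstab ε x hx_cont hx_deriv v hv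
end
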